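/- In the R(f,ℓ)-reduction from ℓ-veto (case ℓ ≥ 2, f ≥ 1): for every subset A ⊆ [n] of participating random voters with profile T_2^A = {T_i^2}_{i ∈ A} ∘ M, every candidate of the original set C strictly defeats every dummy candidate d ∈ D, and s(T_i^2,c) = s(T_i^1,c) under the respective rules for every i and c ∈ C. Consequently, for every c ∈ C, the probability that c is a co-winner of the random profile under ℓ-veto on C equals the probability that c is a co-winner of the random profile under R(f,ℓ) on C ∪ D. -/

import Mathlib

noncomputable def subsetPr {n : ℕ} (p : Fin n → ℝ) (U : Finset (Fin n)) : ℝ :=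
  (∏ i ∈ U, p i) * ∏ i ∈ Uᶜ, (1 - p i)

open Classical in
noncomputable def prEvent {n : ℕ} (p : Fin n → ℝ) (E : Finset (Fin n) → Prop) : ℝ :=
  ∑ U ∈ Finset.univ.filter E, subsetPr p U

/-- The scoring vector of `R(f,ℓ)` over `m'` candidates: the first `f` positions score `2`,
the last `ℓ` positions score `0`, and the positions in between score `1`. -/
def Rvec (f l m' pos : ℕ) : ℕ := if pos < f then 2 else if pos + l < m' then 1 else 0

/-- The ℓ-veto score that voter `i` (with ranking `π i` over `m` candidates) gives to
candidate `c`: `0` if `c` is in the bottom `ℓ` positions, `1` otherwise. -/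
def vSc {n m : ℕ} {C : Type} (π : Fin n → C ≃ Fin m) (l : ℕ) (i : Fin n) (c : C) : ℕ :=
  if m ≤ (π i c : ℕ) + l then 0 else 1

/-- The position of `x` in voter `i`'s extended ranking over `Fin f ⊕ C`
(`T_i^2 = (d_1,…,d_f) ∘ T_i^1`): the dummies `D = Fin f` occupy the top `f` positions. -/
def pos2 {n m : ℕ} {C : Type} (π : Fin n → C ≃ Fin m) (f : ℕ) (i : Fin n) :
    Fin f ⊕ C → ℕ :=
  Sum.elim (fun j => (j : ℕ)) (fun c => f + (π i c : ℕ))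

/-- The `R(f,ℓ)` score that voter `i` gives to candidate `x` in the extended election
with `f + m` candidates. -/
def rSc {n m : ℕ} {C : Type} (π : Fin n → C ≃ Fin m) (f l : ℕ) (i : Fin n)
    (x : Fin f ⊕ C) : ℕ :=
  Rvec f l (f + m) (pos2 π f i x)

/-- The `R(f,ℓ)`-reduction from ℓ-veto: for every set `A` of participating random voters
(the voters of the deterministic profile `M`, with scores `sM`, always participate), every
candidate of `C` strictly defeats every dummy candidate of `D = Fin f` in
`T_2^A = {T_i^2}_{i∈A} ∘ M`; each `T_i^2` contributes to `c ∈ C` exactly its ℓ-veto score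
in `T_i^1`; consequently, for every `c ∈ C`, the probability that `c` is a co-winner under
ℓ-veto on `C` equals the probability that `c` is a co-winner under `R(f,ℓ)` on `D ∪ C`. -/
theorem rfl_veto_reduction (n m f l lam : ℕ) (hl1 : 1 ≤ l) (hl : l ≤ m) (hf : 1 ≤ f)
    (hlam : 0 < lam) (C : Type) [Fintype C] [DecidableEq C] (hC : Fintype.card C = m)
    (π : Fin n → C ≃ Fin m) (p : Fin n → ℝ) (hp : ∀ i, 0 ≤ p i ∧ p i ≤ 1)
    (sM : Fin f ⊕ C → ℕ) (hMd : ∀ j : Fin f, sM (Sum.inl j) < lam)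
    (hMc : ∀ c : C, sM (Sum.inr c) = lam + 3 * n) :
    (∀ (A : Finset (Fin n)) (j : Fin f) (c : C),
        sM (Sum.inl j) + ∑ i ∈ A, rSc π f l i (Sum.inl j)
          < sM (Sum.inr c) + ∑ i ∈ A, rSc π f l i (Sum.inr c))
    ∧ (∀ (i : Fin n) (c : C), rSc π f l i (Sum.inr c) = vSc π l i c)
    ∧ ∀ c : C,
        prEvent p (fun A => ∀ c', ∑ i ∈ A, vSc π l i c' ≤ ∑ i ∈ A, vSc π l i c)
          = prEvent p (fun A => ∀ x : Fin f ⊕ C,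
              sM x + ∑ i ∈ A, rSc π f l i x
                ≤ sM (Sum.inr c) + ∑ i ∈ A, rSc π f l i (Sum.inr c)) := by
  classical
  have hr2 : ∀ (i : Fin n) (j : Fin f), rSc π f l i (Sum.inl j) = 2 := by
    intro i j; simp [rSc, Rvec, pos2, j.isLt]
  have hrv : ∀ (i : Fin n) (c : C), rSc π f l i (Sum.inr c) = vSc π l i c := by
    intro i c
    simp only [rSc, Rvec, pos2, Sum.elim_inr, vSc]
    simp only [show ¬ f + (π i c : ℕ) < f by omega, ↓reduceIte]
    by_cases h : m ≤ (π i c : ℕ) + l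
    · simp only [show ¬ (f + (π i c : ℕ) + l < f + m) by omega, h, ↓reduceIte]
    · simp only [show f + (π i c : ℕ) + l < f + m by omega, h, ↓reduceIte]
  have h1 : ∀ (A : Finset (Fin n)) (j : Fin f) (c : C),
      sM (Sum.inl j) + ∑ i ∈ A, rSc π f l i (Sum.inl j)
        < sM (Sum.inr c) + ∑ i ∈ A, rSc π f l i (Sum.inr c) := by
    intro A j c
    have hA : A.card ≤ n := by simpa using Finset.card_le_univ A
    have hs2 : ∑ i ∈ A, rSc π f l i (Sum.inl j) = 2 * A.card := by
      rw [Finset.sum_congr rfl fun i _ => hr2 i j, Finset.sum_const, smul_eq_mul,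
        mul_comm]
    have hd := hMd j
    have hc := hMc c
    omega
  have hs : ∀ (A : Finset (Fin n)) (c' : C),
      ∑ i ∈ A, rSc π f l i (Sum.inr c') = ∑ i ∈ A, vSc π l i c' :=
    fun A c' => Finset.sum_congr rfl fun i _ => hrv i c'
  refine ⟨h1, hrv, ?_⟩
  intro c
  unfold prEvent
  refine Finset.sum_congr ?_ fun _ _ => rfl
  have hpred : (fun A : Finset (Fin n) =>
      ∀ c', ∑ i ∈ A, vSc π l i c' ≤ ∑ i ∈ A, vSc π l i c)
      = (fun A : Finset (Fin n) => ∀ x : Fin f ⊕ C,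
          sM x + ∑ i ∈ A, rSc π f l i x
            ≤ sM (Sum.inr c) + ∑ i ∈ A, rSc π f l i (Sum.inr c)) := by
    funext A
    apply propext
    constructor
    · intro h x
      cases x with
      | inl j => exact (h1 A j c).le
      | inr c' =>
        rw [hMc c', hMc c, hs, hs]
        have := h c'
        omega
    · intro h c'
      have := h (Sum.inr c')
      rw [hMc c', hMc c, hs, hs] at this
      omega
  rw [hpred]
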